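/- arXiv:1905.04256 — 9 statements merged into one kernel-verified Lean document; each statement's English description precedes it below -/
import Mathlib

section
/- Let D be a nonempty finite subset of the natural numbers, not equal to {0}, and let ι = gcd{r+2 : r ∈ D}. Let S_D = {(1,−1)} ∪ ⋃_{r∈D} {(−r+i, i) : 0 ≤ i ≤ r} ⊆ ℤ². If there exists a walk of n steps, all steps in S_D, from (0,0) to (i,j), then i − j ≡ 2n (mod ι). -/
/-- The step set of tandem walks with face-step levels in `D`. -/
def tandemSteps (D : Finset ℕ) : Set (ℤ × ℤ) :=
  {(1, -1)} ∪ {q | ∃ r ∈ D, ∃ i : ℕ, i ≤ r ∧ q = (-(r : ℤ) + i, (i : ℤ))}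

/- Every step has `q.1 - q.2` equal to `2` or to `-r` with `r ∈ D`, and `-r ≡ 2` modulo `r + 2`. -/
theorem fst_sub_snd_modEq_of_mem_tandemSteps {D : Finset ℕ} {q : ℤ × ℤ}
    (hq : q ∈ tandemSteps D) : q.1 - q.2 ≡ 2 [ZMOD (D.gcd (fun r => r + 2) : ℤ)] := by
  rcases hq with rfl | ⟨r, hr, k, -, rfl⟩
  · norm_num
  · refine (Int.modEq_iff_dvd.2 ?_).symm
    have hdiff : (-(r : ℤ) + k - k) - 2 = -((r : ℤ) + 2) := by ring
    rw [hdiff, dvd_neg]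
    exact Finset.gcd_dvd hr

theorem tandem_walk_periodicity_general (D : Finset ℕ)
    (n : ℕ) (i j : ℤ) (s : Fin n → ℤ × ℤ)
    (hs : ∀ l, s l ∈ tandemSteps D)
    (hsum : ∑ l, s l = (i, j)) :
    i - j ≡ 2 * n [ZMOD (D.gcd (fun r => r + 2) : ℤ)] := by
  calc i - j = ∑ l, ((s l).1 - (s l).2) := by
        rw [Finset.sum_sub_distrib, ← Prod.fst_sum, ← Prod.snd_sum, hsum]
    _ ≡ ∑ _l : Fin n, 2 [ZMOD _] :=
        Int.ModEq.sum fun l _ => fst_sub_snd_modEq_of_mem_tandemSteps (hs l)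
    _ = 2 * n := by simp [mul_comm]

/-- If an `n`-step walk with steps in `S_D` goes from `(0,0)` to `(i,j)`,
then `i - j ≡ 2n (mod ι)` where `ι = gcd(r+2, r ∈ D)`. -/
theorem tandem_walk_periodicity (D : Finset ℕ) (hD : D.Nonempty) (hD0 : D ≠ {0})
    (n : ℕ) (i j : ℤ) (s : Fin n → ℤ × ℤ)
    (hs : ∀ l, s l ∈ tandemSteps D)
    (hsum : ∑ l, s l = (i, j)) :
    i - j ≡ 2 * n [ZMOD (D.gcd (fun r => r + 2) : ℤ)] :=
  tandem_walk_periodicity_general D n i j s hs hsum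
end

section
/- Let D be a nonempty finite subset of ℕ not equal to {0}, and let Λ_D ⊆ ℤ² be the subgroup generated by S_D = {(1,−1)} ∪ ⋃_{r∈D} {(−r+i, i) : 0 ≤ i ≤ r}. If ι = gcd{r+2 : r ∈ D} is odd then Λ_D = ℤ², and if ι is even then Λ_D = {(i,j) ∈ ℤ² : i + j is even}. -/
def evenSumSubgroup : AddSubgroup (ℤ × ℤ) where
  carrier := {q | Even (q.1 + q.2)}
  zero_mem' := by simp
  add_mem' := by
    rintro a b ha hb
    simpa only [Set.mem_ofPred_eq, Prod.fst_add, Prod.snd_add, add_add_add_comm] using ha.add hb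
  neg_mem' := by
    rintro a ha
    simpa only [Set.mem_ofPred_eq, Prod.fst_neg, Prod.snd_neg, ← neg_add] using ha.neg

@[simp]
theorem mem_evenSumSubgroup {q : ℤ × ℤ} : q ∈ evenSumSubgroup ↔ Even (q.1 + q.2) :=
  Iff.rfl

theorem evenSumSubgroup_le {H : AddSubgroup (ℤ × ℤ)} (h₁ : ((1 : ℤ), (1 : ℤ)) ∈ H)
    (h₂ : ((1 : ℤ), (-1 : ℤ)) ∈ H) : evenSumSubgroup ≤ H := by
  rintro q ⟨k, hk⟩
  have hq : q = k • ((1 : ℤ), (1 : ℤ)) + (q.1 - k) • ((1 : ℤ), (-1 : ℤ)) := by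
    ext <;> simp; omega
  rw [hq]
  exact add_mem (zsmul_mem h₁ _) (zsmul_mem h₂ _)

theorem eq_top_of_evenSumSubgroup_le {H : AddSubgroup (ℤ × ℤ)} (hle : evenSumSubgroup ≤ H)
    {q : ℤ × ℤ} (hq : q ∈ H) (hodd : Odd (q.1 + q.2)) : H = ⊤ := by
  refine (AddSubgroup.eq_top_iff' H).mpr fun x => ?_
  by_cases hx : Even (x.1 + x.2)
  · exact hle hx
  · have hxq : x - q ∈ evenSumSubgroup := by
      rw [Int.not_even_iff_odd] at hx
      simpa only [mem_evenSumSubgroup, Prod.fst_sub, Prod.snd_sub, sub_add_sub_comm]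
        using hx.sub_odd hodd
    simpa using add_mem (hle hxq) hq

theorem even_gcd_add_two_iff (D : Finset ℕ) :
    Even (D.gcd (fun r => r + 2)) ↔ ∀ r ∈ D, Even r := by
  simp only [even_iff_two_dvd, Finset.dvd_gcd_iff, Nat.dvd_add_self_right]

theorem exists_pos_mem_of_ne_singleton_zero {D : Finset ℕ} (hD : D.Nonempty) (hD0 : D ≠ {0}) :
    ∃ r ∈ D, 1 ≤ r := by
  by_contra! h
  exact hD0 (hD.subset_singleton_iff.mp fun r hr => Finset.mem_singleton.mpr (by have := h r hr; omega))

namespace tandemSteps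

variable {D : Finset ℕ}

theorem step_mem_closure {r : ℕ} (hr : r ∈ D) {i : ℕ} (hi : i ≤ r) :
    ((-(r : ℤ) + i, (i : ℤ))) ∈ AddSubgroup.closure (tandemSteps D) :=
  AddSubgroup.subset_closure (Or.inr ⟨r, hr, i, hi, rfl⟩)

theorem evenSumSubgroup_le_closure {r : ℕ} (hr : r ∈ D) (hr1 : 1 ≤ r) :
    evenSumSubgroup ≤ AddSubgroup.closure (tandemSteps D) := by
  refine evenSumSubgroup_le ?_ (AddSubgroup.subset_closure (Or.inl rfl))
  have h := sub_mem (step_mem_closure hr hr1) (step_mem_closure hr (Nat.zero_le r))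
  simpa using h

theorem closure_le_evenSumSubgroup (hD : ∀ r ∈ D, Even r) :
    AddSubgroup.closure (tandemSteps D) ≤ evenSumSubgroup := by
  refine (AddSubgroup.closure_le _).mpr ?_
  rintro q (rfl | ⟨r, hr, i, -, rfl⟩)
  · exact ⟨0, rfl⟩
  · obtain ⟨m, hm⟩ := hD r hr
    exact ⟨(i : ℤ) - m, by push_cast [hm]; ring⟩

end tandemSteps

/-- The lattice `Λ_D` spanned by `S_D` is `ℤ²` if `ι = gcd(r+2, r ∈ D)` is odd,
and `{(i,j) : i+j even}` if `ι` is even. -/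
theorem tandem_lattice (D : Finset ℕ) (hD : D.Nonempty) (hD0 : D ≠ {0}) :
    (Odd (D.gcd (fun r => r + 2)) → AddSubgroup.closure (tandemSteps D) = ⊤) ∧
    (Even (D.gcd (fun r => r + 2)) →
      (AddSubgroup.closure (tandemSteps D) : Set (ℤ × ℤ)) = {q | Even (q.1 + q.2)}) := by
  obtain ⟨r₀, hr₀, hr₀_pos⟩ := exists_pos_mem_of_ne_singleton_zero hD hD0
  have hle := tandemSteps.evenSumSubgroup_le_closure hr₀ hr₀_pos
  constructor
  · intro hodd
    obtain ⟨r, hr, hr_odd⟩ : ∃ r ∈ D, Odd r := by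
      simpa [even_gcd_add_two_iff] using Nat.not_even_iff_odd.mpr hodd
    refine eq_top_of_evenSumSubgroup_le hle (tandemSteps.step_mem_closure hr (Nat.zero_le r)) ?_
    simpa using hr_odd.natCast (R := ℤ)
  · intro heven
    have hD_even := (even_gcd_add_two_iff D).mp heven
    exact congrArg SetLike.coe (le_antisymm (tandemSteps.closure_le_evenSumSubgroup hD_even) hle)
end

section
/- For m+1 distinct variables u_0, …, u_m and any integer a ≥ 0, Σ_{i=0}^{m} u_i^{m+a} / ∏_{j≠i}(u_i − u_j) = h_a(u_0, …, u_m), where h_a is the complete homogeneous symmetric polynomial of degree a. -/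
open Finset

section Aux

variable {F : Type*} [Field F]

/-- Complete homogeneous sum over a fintype. -/
noncomputable def Hsum (α : Type*) [Fintype α] [DecidableEq α] (a : ℕ) (v : α → F) : F :=
  ∑ s : Sym α a, ((s : Multiset α).map v).prod

lemma Hsum_equiv {β γ : Type*} [Fintype β] [DecidableEq β] [Fintype γ] [DecidableEq γ]
    (e : β ≃ γ) (a : ℕ) (v : γ → F) : Hsum β a (v ∘ e) = Hsum γ a v := by
  unfold Hsum
  refine Fintype.sum_equiv (Sym.equivCongr e) _ _ (fun s => ?_)
  simp [Sym.equivCongr, Sym.coe_map, Multiset.map_map, Function.comp]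

lemma Hsum_peel {α : Type*} [Fintype α] [DecidableEq α] (a : ℕ) (v : Option α → F) :
    Hsum (Option α) (a + 1) v
      = v none * Hsum (Option α) a v + Hsum α (a + 1) (v ∘ some) := by
  have step : Hsum (Option α) (a + 1) v
      = ∑ x : Sym (Option α) a ⊕ Sym α (a + 1),
          (((symOptionSuccEquiv.symm x : Sym (Option α) (a + 1)) : Multiset (Option α)).map
            v).prod :=
    (Equiv.sum_comp symOptionSuccEquiv.symm
      (fun s : Sym (Option α) (a + 1) => ((s : Multiset (Option α)).map v).prod)).symm
  rw [step, Fintype.sum_sum_type]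
  unfold Hsum
  congr 1
  · rw [Finset.mul_sum]
    refine Finset.sum_congr rfl (fun s _ => ?_)
    have h1 : symOptionSuccEquiv.symm (Sum.inl s) = none ::ₛ s := rfl
    rw [h1]
    simp [Sym.coe_cons]
  · refine Finset.sum_congr rfl (fun s _ => ?_)
    have h1 : symOptionSuccEquiv.symm (Sum.inr s) = s.map Function.Embedding.some := rfl
    rw [h1]
    simp [Sym.coe_map, Multiset.map_map, Function.comp]

lemma Hsum_peel_zero (n a : ℕ) (u : Fin (n + 1) → F) :
    Hsum (Fin (n + 1)) (a + 1) u
      = u 0 * Hsum (Fin (n + 1)) a u + Hsum (Fin n) (a + 1) (u ∘ Fin.succ) := by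
  have key := Hsum_peel (F := F) a (u ∘ (finSuccEquiv n).symm)
  rw [Hsum_equiv (finSuccEquiv n).symm (a + 1) u, Hsum_equiv (finSuccEquiv n).symm a u] at key
  have h1 : (u ∘ (finSuccEquiv n).symm) none = u 0 := by
    simp
  have h2 : (u ∘ (finSuccEquiv n).symm) ∘ some = u ∘ Fin.succ := by
    funext i
    simp [finSuccEquiv_symm_some]
  rw [h1, h2] at key
  exact key

lemma Hsum_peel_last (n a : ℕ) (u : Fin (n + 1) → F) :
    Hsum (Fin (n + 1)) (a + 1) u
      = u (Fin.last n) * Hsum (Fin (n + 1)) a u + Hsum (Fin n) (a + 1) (u ∘ Fin.castSucc) := by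
  have key := Hsum_peel (F := F) a (u ∘ finSuccEquivLast.symm)
  rw [Hsum_equiv finSuccEquivLast.symm (a + 1) u, Hsum_equiv finSuccEquivLast.symm a u] at key
  have h1 : (u ∘ finSuccEquivLast.symm) none = u (Fin.last n) := by
    simp
  have h2 : (u ∘ finSuccEquivLast.symm) ∘ some = u ∘ Fin.castSucc := by
    funext i
    simp [finSuccEquivLast_symm_some]
  rw [h1, h2] at key
  exact key

lemma Hsum_rec (n a : ℕ) (u : Fin (n + 2) → F) :
    Hsum (Fin (n + 1)) (a + 1) (u ∘ Fin.succ) - Hsum (Fin (n + 1)) (a + 1) (u ∘ Fin.castSucc)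
      = (u (Fin.last (n + 1)) - u 0) * Hsum (Fin (n + 2)) a u := by
  have h1 := Hsum_peel_zero (n + 1) a u
  have h2 := Hsum_peel_last (n + 1) a u
  have e1 : Hsum (Fin (n + 1)) (a + 1) (u ∘ Fin.succ)
      = Hsum (Fin (n + 2)) (a + 1) u - u 0 * Hsum (Fin (n + 2)) a u := by
    rw [h1]; ring
  have e2 : Hsum (Fin (n + 1)) (a + 1) (u ∘ Fin.castSucc)
      = Hsum (Fin (n + 2)) (a + 1) u - u (Fin.last (n + 1)) * Hsum (Fin (n + 2)) a u := by
    rw [h2]; ring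
  rw [e1, e2]; ring

lemma Hsum_fin_one (a : ℕ) (v : Fin 1 → F) : Hsum (Fin 1) a v = v 0 ^ a := by
  unfold Hsum
  have key : ∀ s : Sym (Fin 1) a, ((s : Multiset (Fin 1)).map v).prod = v 0 ^ a := by
    intro s
    have h1 : (s : Multiset (Fin 1)).map v = (s : Multiset (Fin 1)).map (fun _ => v 0) :=
      Multiset.map_congr rfl (fun x _ => by rw [Subsingleton.elim x 0])
    rw [h1, Multiset.map_const', Multiset.prod_replicate]
    congr 1
    exact s.2
  exact (Fintype.sum_unique _).trans (key _)

end Aux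

section DividedDiff

variable {F : Type*} [Field F]

lemma dd_rec (n N : ℕ) (u : Fin (n + 2) → F) (hu : Function.Injective u) :
    (∑ i : Fin (n + 1), u i.succ ^ N / ∏ j ∈ univ.erase i, (u i.succ - u j.succ))
      - ∑ i : Fin (n + 1), u i.castSucc ^ N / ∏ j ∈ univ.erase i, (u i.castSucc - u j.castSucc)
    = (u (Fin.last (n + 1)) - u 0)
        * ∑ i : Fin (n + 2), u i ^ N / ∏ j ∈ univ.erase i, (u i - u j) := by
  have hne : ∀ {i j : Fin (n + 2)}, i ≠ j → u i - u j ≠ 0 :=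
    fun h => sub_ne_zero.2 (fun e => h (hu e))
  have hprodne : ∀ (k : Fin (n + 2)) (s : Finset (Fin (n + 2))), k ∉ s →
      ∏ j ∈ s, (u k - u j) ≠ 0 := by
    intro k s hk
    exact Finset.prod_ne_zero_iff.2 (fun j hj => hne (fun e => hk (e ▸ hj)))
  set g0 : Fin (n + 2) → F :=
    fun k => u k ^ N / ∏ j ∈ (univ.erase (0 : Fin (n + 2))).erase k, (u k - u j) with hg0
  set g1 : Fin (n + 2) → F :=
    fun k => u k ^ N / ∏ j ∈ (univ.erase (Fin.last (n + 1))).erase k, (u k - u j) with hg1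
  set h : Fin (n + 2) → F :=
    fun k => u k ^ N / ∏ j ∈ univ.erase k, (u k - u j) with hh
  -- image facts
  have himg_succ : ∀ i : Fin (n + 1),
      (univ.erase i).image Fin.succ = (univ.erase (0 : Fin (n + 2))).erase i.succ := by
    intro i
    ext k
    simp only [mem_image, mem_erase, mem_univ, and_true]
    constructor
    · rintro ⟨j, hj, rfl⟩
      exact ⟨fun e => hj (Fin.succ_injective _ e), Fin.succ_ne_zero j⟩
    · rintro ⟨h1, h2⟩
      obtain ⟨j, rfl⟩ := Fin.exists_succ_eq.2 h2
      exact ⟨j, fun e => h1 (by rw [e]), rfl⟩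
  have himg_cast : ∀ i : Fin (n + 1),
      (univ.erase i).image Fin.castSucc
        = (univ.erase (Fin.last (n + 1))).erase i.castSucc := by
    intro i
    ext k
    simp only [mem_image, mem_erase, mem_univ, and_true]
    constructor
    · rintro ⟨j, hj, rfl⟩
      exact ⟨fun e => hj (Fin.castSucc_injective _ e), (Fin.castSucc_lt_last j).ne⟩
    · rintro ⟨h1, h2⟩
      obtain ⟨j, rfl⟩ := Fin.exists_castSucc_eq.2 h2
      exact ⟨j, fun e => h1 (by rw [e]), rfl⟩
  have himg_succ_univ : (univ : Finset (Fin (n + 1))).image Fin.succ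
      = univ.erase (0 : Fin (n + 2)) := by
    ext k
    simp only [mem_image, mem_univ, true_and, mem_erase, and_true]
    exact Fin.exists_succ_eq
  have himg_cast_univ : (univ : Finset (Fin (n + 1))).image Fin.castSucc
      = univ.erase (Fin.last (n + 1)) := by
    ext k
    simp only [mem_image, mem_univ, true_and, mem_erase, and_true]
    exact Fin.exists_castSucc_eq
  -- rewrite the two sums
  have hsum0 : (∑ i : Fin (n + 1), u i.succ ^ N / ∏ j ∈ univ.erase i, (u i.succ - u j.succ))
      = ∑ k ∈ univ.erase (0 : Fin (n + 2)), g0 k := by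
    rw [← himg_succ_univ, Finset.sum_image (fun x _ y _ e => Fin.succ_injective _ e)]
    refine Finset.sum_congr rfl (fun i _ => ?_)
    rw [hg0]
    dsimp only
    rw [← himg_succ i, Finset.prod_image (fun x _ y _ e => Fin.succ_injective _ e)]
  have hsum1 : (∑ i : Fin (n + 1),
        u i.castSucc ^ N / ∏ j ∈ univ.erase i, (u i.castSucc - u j.castSucc))
      = ∑ k ∈ univ.erase (Fin.last (n + 1)), g1 k := by
    rw [← himg_cast_univ, Finset.sum_image (fun x _ y _ e => Fin.castSucc_injective _ e)]
    refine Finset.sum_congr rfl (fun i _ => ?_)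
    rw [hg1]
    dsimp only
    rw [← himg_cast i, Finset.prod_image (fun x _ y _ e => Fin.castSucc_injective _ e)]
  rw [hsum0, hsum1]
  -- basic distinctness
  have hlast0 : (Fin.last (n + 1)) ≠ (0 : Fin (n + 2)) := by
    simp [Fin.ext_iff]
  have hcne : u (Fin.last (n + 1)) - u 0 ≠ 0 := hne hlast0
  have hmem_last : Fin.last (n + 1) ∈ univ.erase (0 : Fin (n + 2)) :=
    mem_erase.2 ⟨hlast0, mem_univ _⟩
  have hmem_0 : (0 : Fin (n + 2)) ∈ univ.erase (Fin.last (n + 1)) :=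
    mem_erase.2 ⟨hlast0.symm, mem_univ _⟩
  set c : F := u (Fin.last (n + 1)) - u 0 with hc
  -- split off boundary terms
  have hsplit0 : ∑ k ∈ univ.erase (0 : Fin (n + 2)), g0 k
      = g0 (Fin.last (n + 1))
        + ∑ k ∈ (univ.erase (0 : Fin (n + 2))).erase (Fin.last (n + 1)), g0 k :=
    (Finset.add_sum_erase _ g0 hmem_last).symm
  have hsplit1 : ∑ k ∈ univ.erase (Fin.last (n + 1)), g1 k
      = g1 0 + ∑ k ∈ (univ.erase (Fin.last (n + 1))).erase (0 : Fin (n + 2)), g1 k :=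
    (Finset.add_sum_erase _ g1 hmem_0).symm
  rw [Finset.erase_right_comm] at hsplit1
  have hsplith0 : ∑ k : Fin (n + 2), h k = h 0 + ∑ k ∈ univ.erase (0 : Fin (n + 2)), h k :=
    (Finset.add_sum_erase _ h (mem_univ _)).symm
  have hsplith1 : ∑ k ∈ univ.erase (0 : Fin (n + 2)), h k
      = h (Fin.last (n + 1))
        + ∑ k ∈ (univ.erase (0 : Fin (n + 2))).erase (Fin.last (n + 1)), h k :=
    (Finset.add_sum_erase _ h hmem_last).symm
  rw [hsplit0, hsplit1, hsplith0, hsplith1]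
  -- boundary identities
  have hbl : g0 (Fin.last (n + 1)) = c * h (Fin.last (n + 1)) := by
    have hfac : ∏ j ∈ univ.erase (Fin.last (n + 1)), (u (Fin.last (n + 1)) - u j)
        = (u (Fin.last (n + 1)) - u 0)
          * ∏ j ∈ (univ.erase (Fin.last (n + 1))).erase (0 : Fin (n + 2)),
              (u (Fin.last (n + 1)) - u j) :=
      (Finset.mul_prod_erase _ _ hmem_0).symm
    rw [Finset.erase_right_comm] at hfac
    have hQ : ∏ j ∈ (univ.erase (0 : Fin (n + 2))).erase (Fin.last (n + 1)),
        (u (Fin.last (n + 1)) - u j) ≠ 0 :=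
      hprodne _ _ (fun hmem => (mem_erase.1 hmem).1 rfl)
    rw [hg0, hh]
    dsimp only
    rw [hfac, hc]
    have hcne' : u (Fin.last (n + 1)) - u 0 ≠ 0 := hne hlast0
    field_simp
  have hb0 : g1 0 = -(c * h 0) := by
    have hfac : ∏ j ∈ univ.erase (0 : Fin (n + 2)), (u 0 - u j)
        = (u 0 - u (Fin.last (n + 1)))
          * ∏ j ∈ (univ.erase (0 : Fin (n + 2))).erase (Fin.last (n + 1)), (u 0 - u j) :=
      (Finset.mul_prod_erase _ _ hmem_last).symm
    have hQ : ∏ j ∈ (univ.erase (0 : Fin (n + 2))).erase (Fin.last (n + 1)),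
        (u 0 - u j) ≠ 0 :=
      hprodne _ _ (fun hmem => (mem_erase.1 (mem_erase.1 hmem).2).1 rfl)
    have hA : u 0 - u (Fin.last (n + 1)) ≠ 0 := hne hlast0.symm
    have hset : (univ.erase (Fin.last (n + 1))).erase (0 : Fin (n + 2))
        = (univ.erase (0 : Fin (n + 2))).erase (Fin.last (n + 1)) :=
      Finset.erase_right_comm
    rw [hg1, hh]
    dsimp only
    rw [hset, hfac, hc]
    field_simp
    ring
  -- interior identity
  have hint : ∀ k ∈ (univ.erase (0 : Fin (n + 2))).erase (Fin.last (n + 1)),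
      g0 k - g1 k = c * h k := by
    intro k hk
    have hk0 : k ≠ 0 := (mem_erase.1 (mem_erase.1 hk).2).1
    have hkl : k ≠ Fin.last (n + 1) := (mem_erase.1 hk).1
    have hkQ : k ∉ ((univ.erase (0 : Fin (n + 2))).erase k).erase (Fin.last (n + 1)) :=
      fun hmem => (mem_erase.1 (mem_erase.1 hmem).2).1 rfl
    have hQ : ∏ j ∈ ((univ.erase (0 : Fin (n + 2))).erase k).erase (Fin.last (n + 1)),
        (u k - u j) ≠ 0 := hprodne _ _ hkQ
    have hA : u k - u 0 ≠ 0 := hne hk0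
    have hB : u k - u (Fin.last (n + 1)) ≠ 0 := hne hkl
    have hlastmem : Fin.last (n + 1) ∈ (univ.erase (0 : Fin (n + 2))).erase k :=
      mem_erase.2 ⟨Ne.symm hkl, hmem_last⟩
    have h0mem : (0 : Fin (n + 2)) ∈ (univ.erase (Fin.last (n + 1))).erase k :=
      mem_erase.2 ⟨Ne.symm hk0, hmem_0⟩
    have h0univ : (0 : Fin (n + 2)) ∈ univ.erase k := mem_erase.2 ⟨Ne.symm hk0, mem_univ _⟩
    have hd0 : ∏ j ∈ (univ.erase (0 : Fin (n + 2))).erase k, (u k - u j)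
        = (u k - u (Fin.last (n + 1)))
          * ∏ j ∈ ((univ.erase (0 : Fin (n + 2))).erase k).erase (Fin.last (n + 1)),
              (u k - u j) :=
      (Finset.mul_prod_erase _ _ hlastmem).symm
    have hd1 : ∏ j ∈ (univ.erase (Fin.last (n + 1))).erase k, (u k - u j)
        = (u k - u 0)
          * ∏ j ∈ ((univ.erase (Fin.last (n + 1))).erase k).erase (0 : Fin (n + 2)),
              (u k - u j) :=
      (Finset.mul_prod_erase _ _ h0mem).symm
    have hset1 : ((univ.erase (Fin.last (n + 1))).erase k).erase (0 : Fin (n + 2))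
        = ((univ.erase (0 : Fin (n + 2))).erase k).erase (Fin.last (n + 1)) := by
      rw [Finset.erase_right_comm (a := Fin.last (n + 1))]
      rw [Finset.erase_right_comm (a := (0 : Fin (n + 2)))]
      exact Finset.erase_right_comm
    rw [hset1] at hd1
    have hdh : ∏ j ∈ univ.erase k, (u k - u j)
        = (u k - u 0) * ∏ j ∈ (univ.erase k).erase (0 : Fin (n + 2)), (u k - u j) :=
      (Finset.mul_prod_erase _ _ h0univ).symm
    have hset2 : (univ.erase k).erase (0 : Fin (n + 2))
        = (univ.erase (0 : Fin (n + 2))).erase k := Finset.erase_right_comm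
    rw [hset2, hd0] at hdh
    rw [hg0, hg1, hh]
    dsimp only
    rw [hd0, hd1, hdh, hc]
    field_simp
    ring
  have hTsum : (∑ k ∈ (univ.erase (0 : Fin (n + 2))).erase (Fin.last (n + 1)), g0 k)
      - ∑ k ∈ (univ.erase (0 : Fin (n + 2))).erase (Fin.last (n + 1)), g1 k
      = c * ∑ k ∈ (univ.erase (0 : Fin (n + 2))).erase (Fin.last (n + 1)), h k := by
    rw [← Finset.sum_sub_distrib, Finset.mul_sum]
    exact Finset.sum_congr rfl hint
  linear_combination hbl - hb0 + hTsum

end DividedDiff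

section Main

variable {F : Type*} [Field F]

lemma main_aux : ∀ (m a : ℕ) (u : Fin (m + 1) → F), Function.Injective u →
    ∑ i : Fin (m + 1), u i ^ (m + a) / ∏ j ∈ Finset.univ.erase i, (u i - u j)
      = Hsum (Fin (m + 1)) a u := by
  intro m
  induction m with
  | zero =>
    intro a u _
    rw [Hsum_fin_one]
    simp
  | succ m ih =>
    intro a u hu
    have hlast0 : (Fin.last (m + 1)) ≠ (0 : Fin (m + 2)) := by simp [Fin.ext_iff]
    have hc : u (Fin.last (m + 1)) - u 0 ≠ 0 :=
      sub_ne_zero.2 (fun e => hlast0 (hu e))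
    have hN : m + 1 + a = m + (a + 1) := by omega
    have hA := dd_rec (F := F) m (m + 1 + a) u hu
    have hsucc : Function.Injective (u ∘ Fin.succ) :=
      hu.comp (Fin.succ_injective _)
    have hcast : Function.Injective (u ∘ Fin.castSucc) :=
      hu.comp (Fin.castSucc_injective _)
    have ih1 := ih (a + 1) (u ∘ Fin.succ) hsucc
    have ih2 := ih (a + 1) (u ∘ Fin.castSucc) hcast
    rw [hN] at hA
    have e1 : (∑ i : Fin (m + 1), u i.succ ^ (m + (a + 1))
          / ∏ j ∈ univ.erase i, (u i.succ - u j.succ))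
        = Hsum (Fin (m + 1)) (a + 1) (u ∘ Fin.succ) := by
      rw [← ih1]
      rfl
    have e2 : (∑ i : Fin (m + 1), u i.castSucc ^ (m + (a + 1))
          / ∏ j ∈ univ.erase i, (u i.castSucc - u j.castSucc))
        = Hsum (Fin (m + 1)) (a + 1) (u ∘ Fin.castSucc) := by
      rw [← ih2]
      rfl
    rw [e1, e2, Hsum_rec] at hA
    refine mul_left_cancel₀ hc ?_
    rw [show m + 1 + a = m + (a + 1) from by omega]
    exact hA.symm

end Main

/-- For distinct `u₀, …, u_m` in a field,
`Σᵢ uᵢ^{m+a} / ∏_{j≠i}(uᵢ - uⱼ) = h_a(u₀, …, u_m)`,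
the complete homogeneous symmetric polynomial of degree `a`
(written as a sum over multisets of size `a`). -/
theorem lagrange_complete_homogeneous (F : Type*) [Field F] (m a : ℕ)
    (u : Fin (m + 1) → F) (hu : Function.Injective u) :
    ∑ i : Fin (m + 1), u i ^ (m + a) / ∏ j ∈ Finset.univ.erase i, (u i - u j)
      = ∑ s : Sym (Fin (m + 1)) a, ((s : Multiset (Fin (m + 1))).map u).prod := by
  rw [main_aux m a u hu]
  rfl
end

section
/- Let z, z_0, …, z_p be nonnegative reals with z_p > 0 satisfying z + Σ_{r=0}^p (r+1) z_r = 1 and z = Σ_{r=1}^p C(r+1, 2) z_r. Let (X,Y) be the ℤ²-valued random variable with ℙ((X,Y)=(1,−1)) = z and ℙ((X,Y)=(−(r−j), j)) = z_r for 0 ≤ j ≤ r ≤ p. Then E(X) = E(Y) = 0, E(X²) = E(Y²) = 2σ², and E(XY) = −σ², where σ² = Σ_{r=1}^p C(r+2, 3) z_r. -/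
open Finset

lemma c2cast (r : ℕ) : ((r + 1).choose 2 : ℝ) = r * (r + 1) / 2 := by
  induction r with
  | zero => norm_num
  | succ n ih =>
    rw [show n + 1 + 1 = (n + 1) + 1 from rfl, Nat.choose_succ_succ (n + 1) 1]
    push_cast [ih, Nat.choose_one_right]
    ring

lemma c3cast (r : ℕ) : ((r + 2).choose 3 : ℝ) = r * (r + 1) * (r + 2) / 6 := by
  induction r with
  | zero => norm_num
  | succ n ih =>
    rw [show n + 1 + 2 = (n + 2) + 1 from rfl, Nat.choose_succ_succ (n + 2) 2]
    push_cast [ih, c2cast (n + 1)]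
    ring

lemma sum1 (r : ℕ) : ∑ j ∈ range (r + 1), (j : ℝ) = r * (r + 1) / 2 := by
  induction r with
  | zero => simp
  | succ n ih => rw [Finset.sum_range_succ, ih]; push_cast; ring

lemma sum2 (r : ℕ) : ∑ j ∈ range (r + 1), (j : ℝ) ^ 2 = r * (r + 1) * (2 * r + 1) / 6 := by
  induction r with
  | zero => simp
  | succ n ih => rw [Finset.sum_range_succ, ih]; push_cast; ring

lemma sumX (r : ℕ) : ∑ j ∈ range (r + 1), ((j : ℝ) - r) = -(r * (r + 1) / 2) := by
  have h : ∑ j ∈ range (r + 1), ((j : ℝ) - r)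
      = (∑ j ∈ range (r + 1), (j : ℝ)) - (r + 1) * r := by
    rw [Finset.sum_sub_distrib, Finset.sum_const, card_range]
    push_cast
    ring
  rw [h, sum1]; ring

lemma sumX2 (r : ℕ) : ∑ j ∈ range (r + 1), ((j : ℝ) - r) ^ 2
    = r * (r + 1) * (2 * r + 1) / 6 := by
  have h : ∀ j ∈ range (r + 1), ((j : ℝ) - r) ^ 2
      = (j : ℝ) ^ 2 - 2 * r * j + r ^ 2 := by intro j _; ring
  rw [Finset.sum_congr rfl h]
  rw [Finset.sum_add_distrib, Finset.sum_sub_distrib, Finset.sum_const, card_range,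
    ← Finset.mul_sum, sum1, sum2]
  push_cast
  ring

lemma sumXY (r : ℕ) : ∑ j ∈ range (r + 1), ((j : ℝ) - r) * j
    = -(((r : ℝ) - 1) * r * (r + 1) / 6) := by
  have h : ∀ j ∈ range (r + 1), ((j : ℝ) - r) * j = (j : ℝ) ^ 2 - r * j := by
    intro j _; ring
  rw [Finset.sum_congr rfl h, Finset.sum_sub_distrib, ← Finset.mul_sum, sum1, sum2]
  ring

lemma split_sum (p : ℕ) (f : ℕ → ℝ) :
    ∑ r ∈ range (p + 1), f r = f 0 + ∑ r ∈ Icc 1 p, f r := by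
  rw [range_eq_Ico, Finset.sum_eq_sum_Ico_succ_bot (Nat.succ_pos p), Nat.succ_eq_add_one, Finset.Ico_add_one_right_eq_Icc]

/-- Moments of the zero-drift tandem step distribution: the step `(1,-1)` has
probability `z` and each step `(-(r-j), j)` with `0 ≤ j ≤ r ≤ p` has probability `z_r`.
Under the normalization and zero-drift conditions, the expectations satisfy
`E(X) = E(Y) = 0`, `E(X²) = E(Y²) = 2σ²`, `E(XY) = -σ²` with
`σ² = Σ_{r=1}^p C(r+2,3) z_r`. -/
theorem tandem_step_moments (p : ℕ) (hp : 1 ≤ p) (z : ℝ) (zr : ℕ → ℝ)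
    (hz : 0 ≤ z) (hzr : ∀ r, 0 ≤ zr r) (hzp : 0 < zr p)
    (hnorm : z + ∑ r ∈ range (p + 1), ((r : ℝ) + 1) * zr r = 1)
    (hdrift : z = ∑ r ∈ Icc 1 p, ((r + 1).choose 2 : ℝ) * zr r) :
    let σ2 : ℝ := ∑ r ∈ Icc 1 p, ((r + 2).choose 3 : ℝ) * zr r
    -- E(X) = 0
    (z * 1 + ∑ r ∈ range (p + 1), zr r * ∑ j ∈ range (r + 1), ((j : ℝ) - r) = 0) ∧
    -- E(Y) = 0
    (z * (-1) + ∑ r ∈ range (p + 1), zr r * ∑ j ∈ range (r + 1), (j : ℝ) = 0) ∧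
    -- E(X²) = 2σ²
    (z * 1 + ∑ r ∈ range (p + 1), zr r * ∑ j ∈ range (r + 1), ((j : ℝ) - r) ^ 2 = 2 * σ2) ∧
    -- E(Y²) = 2σ²
    (z * 1 + ∑ r ∈ range (p + 1), zr r * ∑ j ∈ range (r + 1), (j : ℝ) ^ 2 = 2 * σ2) ∧
    -- E(XY) = -σ²
    (z * (-1) + ∑ r ∈ range (p + 1), zr r * ∑ j ∈ range (r + 1), ((j : ℝ) - r) * j = -σ2) := by
  intro σ2
  simp only [sumX, sumX2, sumXY, sum1, sum2]
  -- A = z (drift), B = σ2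
  have hA : z = ∑ x ∈ Icc 1 p, (x : ℝ) * (x + 1) / 2 * zr x := by
    rw [hdrift]
    exact Finset.sum_congr rfl fun r _ => by rw [c2cast]
  have hB : σ2 = ∑ x ∈ Icc 1 p, (x : ℝ) * (x + 1) * (x + 2) / 6 * zr x := by
    exact Finset.sum_congr rfl fun r _ => by rw [c3cast]
  set A := ∑ x ∈ Icc 1 p, (x : ℝ) * (x + 1) / 2 * zr x with hAdef
  set B := ∑ x ∈ Icc 1 p, (x : ℝ) * (x + 1) * (x + 2) / 6 * zr x with hBdef
  have e1 : ∑ x ∈ Icc 1 p, zr x * -((x : ℝ) * (x + 1) / 2) = -A := by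
    rw [hAdef, ← Finset.sum_neg_distrib]
    exact Finset.sum_congr rfl fun r _ => by ring
  have e2 : ∑ x ∈ Icc 1 p, zr x * ((x : ℝ) * (x + 1) / 2) = A := by
    rw [hAdef]
    exact Finset.sum_congr rfl fun r _ => by ring
  have e3 : ∑ x ∈ Icc 1 p, zr x * ((x : ℝ) * (x + 1) * (2 * x + 1) / 6) = 2 * B - A := by
    have h : ∀ x ∈ Icc 1 p, zr x * ((x : ℝ) * (x + 1) * (2 * x + 1) / 6)
        = 2 * ((x : ℝ) * (x + 1) * (x + 2) / 6 * zr x) - (x : ℝ) * (x + 1) / 2 * zr x := by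
      intro x _; ring
    rw [Finset.sum_congr rfl h, Finset.sum_sub_distrib, ← Finset.mul_sum, ← hAdef, ← hBdef]
  have e5 : ∑ x ∈ Icc 1 p, zr x * -(((x : ℝ) - 1) * x * (x + 1) / 6) = A - B := by
    have h : ∀ x ∈ Icc 1 p, zr x * -(((x : ℝ) - 1) * x * (x + 1) / 6)
        = (x : ℝ) * (x + 1) / 2 * zr x - (x : ℝ) * (x + 1) * (x + 2) / 6 * zr x := by
      intro x _; ring
    rw [Finset.sum_congr rfl h, Finset.sum_sub_distrib, ← hAdef, ← hBdef]
  refine ⟨?_, ?_, ?_, ?_, ?_⟩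
  · rw [split_sum p (fun x => zr x * -((x : ℝ) * (x + 1) / 2)), e1]
    push_cast
    linarith [hA]
  · rw [split_sum p (fun x => zr x * ((x : ℝ) * (x + 1) / 2)), e2]
    push_cast
    linarith [hA]
  · rw [split_sum p (fun x => zr x * ((x : ℝ) * (x + 1) * (2 * x + 1) / 6)), e3, hB]
    push_cast
    linarith [hA]
  · rw [split_sum p (fun x => zr x * ((x : ℝ) * (x + 1) * (2 * x + 1) / 6)), e3, hB]
    push_cast
    linarith [hA]
  · rw [split_sum p (fun x => zr x * -(((x : ℝ) - 1) * x * (x + 1) / 6)), e5, hB]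
    push_cast
    linarith [hA]
end

section
/- The function V_∞(a,b) = a·b·(a+b) on ℤ² is discrete harmonic for the tandem random walk: for all (a,b) ∈ ℤ², V_∞(a,b) = z·V_∞(a+1, b−1) + Σ_{r=0}^{p} z_r · Σ_{i+j=r, i,j≥0} V_∞(a−i, b+j), whenever the weights z, z_0, …, z_p satisfy z + Σ_{r=0}^p (r+1) z_r = 1 and z = Σ_{r=1}^p C(r+1,2) z_r. -/
open Finset

lemma inner_sum_eval (r : ℕ) : ∀ a b : ℝ,
    ∑ i ∈ range (r + 1),
      ((a - i) * (b + (r - i : ℕ)) * ((a - i) + (b + (r - i : ℕ)))) =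
      ((r : ℝ) + 1) * (a * b * (a + b)) +
      ((r : ℝ) * ((r : ℝ) + 1) / 2) * ((a + b) * (a - b + 1)) := by
  induction r with
  | zero => intro a b; simp
  | succ r ih =>
    intro a b
    rw [sum_range_succ]
    have hcong : ∑ i ∈ range (r + 1),
        ((a - i) * (b + (r + 1 - i : ℕ)) * ((a - i) + (b + (r + 1 - i : ℕ)))) =
        ∑ i ∈ range (r + 1),
        ((a - i) * ((b + 1) + (r - i : ℕ)) * ((a - i) + ((b + 1) + (r - i : ℕ)))) := by
      refine sum_congr rfl fun i hi => ?_
      have hle : i ≤ r := Nat.lt_succ_iff.mp (mem_range.mp hi)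
      have : (r + 1 - i : ℕ) = (r - i) + 1 := by omega
      rw [this]
      push_cast
      ring
    rw [hcong, ih a (b + 1)]
    simp only [Nat.sub_self, Nat.cast_zero, Nat.cast_add, Nat.cast_one]
    ring

/-- `V_∞(a,b) = ab(a+b)` is discrete harmonic for the (unkilled) tandem random walk
with step weights `z` for `(1,-1)` and `z_r` for each `(-i,j)` with `i+j = r`,
whenever the weights are normalized and have zero drift. -/
theorem Vinfty_harmonic (p : ℕ) (hp : 1 ≤ p) (z : ℝ) (zr : ℕ → ℝ)
    (hnorm : z + ∑ r ∈ range (p + 1), ((r : ℝ) + 1) * zr r = 1)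
    (hdrift : z = ∑ r ∈ Icc 1 p, ((r + 1).choose 2 : ℝ) * zr r) :
    ∀ a b : ℤ,
      (a : ℝ) * b * (a + b) =
        z * (((a : ℝ) + 1) * ((b : ℝ) - 1) * ((a : ℝ) + b)) +
        ∑ r ∈ range (p + 1), zr r *
          ∑ i ∈ range (r + 1),
            (((a : ℝ) - i) * ((b : ℝ) + (r - i : ℕ)) * (((a : ℝ) - i) + ((b : ℝ) + (r - i : ℕ)))) := by
  intro a b
  set A : ℝ := (a : ℝ)
  set B : ℝ := (b : ℝ)
  have hsum : ∑ r ∈ range (p + 1), zr r *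
      ∑ i ∈ range (r + 1),
        ((A - i) * (B + (r - i : ℕ)) * ((A - i) + (B + (r - i : ℕ)))) =
      (A * B * (A + B)) * (∑ r ∈ range (p + 1), ((r : ℝ) + 1) * zr r) +
      ((A + B) * (A - B + 1)) * (∑ r ∈ range (p + 1), ((r : ℝ) * ((r : ℝ) + 1) / 2) * zr r) := by
    rw [mul_sum, mul_sum, ← sum_add_distrib]
    refine sum_congr rfl fun r _ => ?_
    rw [inner_sum_eval r A B]
    ring
  have hdrift' : ∑ r ∈ range (p + 1), ((r : ℝ) * ((r : ℝ) + 1) / 2) * zr r = z := by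
    rw [hdrift]
    rw [show range (p + 1) = Icc 0 p from by rw [← Nat.Ico_zero_eq_range]; rfl]
    rw [show Icc 0 p = insert 0 (Icc 1 p) from by ext x; simp; omega,
      sum_insert (by simp)]
    simp only [Nat.cast_zero, zero_mul, zero_div, zero_add]
    refine sum_congr rfl fun r _ => ?_
    rw [Nat.cast_choose_two]
    push_cast
    ring
  rw [hsum, hdrift']
  have h1 : ∑ r ∈ range (p + 1), ((r : ℝ) + 1) * zr r = 1 - z := by linarith
  rw [h1]
  ring
end

section
/- For p = 1 with z = z_1 = 1/3 and z_0 = 0 (1-tandem walks with uniform steps), the number of quadrant walks of length n = 3m + 2i + j from (0,0) to (i,j), with steps (1,−1), (−1,0), (0,1), equals (i+1)(j+1)(i+j+2)·(3m+2i+j)! / (m!·(m+i+1)!·(m+i+j+2)!). -/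
open Finset

namespace TandemWalk

def Steps : Set (ℤ × ℤ) := {(1, -1), (-1, 0), (0, 1)}

def Cond (n : ℕ) (i j : ℤ) (s : Fin n → ℤ × ℤ) : Prop :=
  (∀ l, s l ∈ Steps) ∧
  (∀ k : ℕ,
    0 ≤ (∑ l ∈ univ.filter (fun l : Fin n => (l : ℕ) < k), s l).1 ∧
    0 ≤ (∑ l ∈ univ.filter (fun l : Fin n => (l : ℕ) < k), s l).2) ∧
  (∑ l, s l) = (i, j)

noncomputable def W (n : ℕ) (i j : ℤ) : ℕ := Nat.card {s : Fin n → ℤ × ℤ // Cond n i j s}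

instance : Finite Steps :=
  (Set.toFinite ({(1, -1), (-1, 0), (0, 1)} : Set (ℤ × ℤ))).to_subtype

theorem finite_subtype {n : ℕ} (P : (Fin n → ℤ × ℤ) → Prop)
    (h : ∀ s, P s → ∀ l, s l ∈ Steps) : Finite {s // P s} := by
  apply Finite.of_injective (fun s (l : Fin n) => (⟨s.1 l, h s.1 s.2 l⟩ : Steps))
  intro a b hab
  ext l : 2
  exact congrArg Subtype.val (congrFun hab l)

instance (n : ℕ) (i j : ℤ) : Finite {s : Fin n → ℤ × ℤ // Cond n i j s} :=
  finite_subtype _ (fun _ h => h.1)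

def psum (n : ℕ) (s : Fin n → ℤ × ℤ) (k : ℕ) : ℤ × ℤ :=
  ∑ l ∈ univ.filter (fun l : Fin n => (l : ℕ) < k), s l

theorem psum_succ (n : ℕ) (s : Fin (n + 1) → ℤ × ℤ) (k : ℕ) :
    psum (n + 1) s k = psum n (fun l => s l.castSucc) k
      + (if n < k then s (Fin.last n) else 0) := by
  unfold psum
  rw [sum_filter, sum_filter, Fin.sum_univ_castSucc]
  simp only [Fin.coe_castSucc, Fin.val_last]

theorem psum_ge (n : ℕ) (s : Fin n → ℤ × ℤ) (k : ℕ) (h : n ≤ k) :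
    psum n s k = ∑ l, s l := by
  unfold psum
  rw [filter_true_of_mem]
  intro l _
  exact lt_of_lt_of_le l.isLt h

theorem W_eq_zero_of_neg (n : ℕ) (i j : ℤ) (h : i < 0 ∨ j < 0) : W n i j = 0 := by
  have : IsEmpty {s : Fin n → ℤ × ℤ // Cond n i j s} := by
    constructor
    rintro ⟨s, h1, h2, h3⟩
    have hk := h2 n
    have he : psum n s n = (i, j) := by rw [psum_ge n s n le_rfl, h3]
    change 0 ≤ (psum n s n).1 ∧ 0 ≤ (psum n s n).2 at hk
    rw [he] at hk
    rcases h with h | h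
    · exact absurd hk.1 (by simpa using not_le.mpr h)
    · exact absurd hk.2 (by simpa using not_le.mpr h)
  exact Nat.card_of_isEmpty

theorem W_eq_zero_of_big (n : ℕ) (i j : ℤ) (h : (n : ℤ) < 2 * i + j) : W n i j = 0 := by
  have : IsEmpty {s : Fin n → ℤ × ℤ // Cond n i j s} := by
    constructor
    rintro ⟨s, h1, h2, h3⟩
    have hi : (∑ l, (s l).1) = i := by rw [← Prod.fst_sum, h3]
    have hj : (∑ l, (s l).2) = j := by rw [← Prod.snd_sum, h3]
    have hsum : (∑ l, (2 * (s l).1 + (s l).2)) = 2 * i + j := by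
      rw [sum_add_distrib, ← mul_sum, hi, hj]
    have hle : (∑ l, (2 * (s l).1 + (s l).2)) ≤ ∑ _l : Fin n, (1 : ℤ) := by
      apply sum_le_sum
      intro l _
      have := h1 l
      simp only [Steps, Set.mem_insert_iff, Set.mem_singleton_iff] at this
      rcases this with h' | h' | h' <;> rw [h'] <;> norm_num
    rw [hsum, sum_const, card_univ, Fintype.card_fin, nsmul_eq_mul, mul_one] at hle
    omega
  exact Nat.card_of_isEmpty

theorem W_zero : W 0 0 0 = 1 := by
  have : Unique {s : Fin 0 → ℤ × ℤ // Cond 0 0 0 s} := by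
    refine ⟨⟨⟨fun l => l.elim0, fun l => l.elim0, fun k => ?_, ?_⟩⟩, fun s => ?_⟩
    · simp
    · simp [Prod.ext_iff]
    · exact Subtype.ext (funext fun l => l.elim0)
  exact Nat.card_unique


theorem cond_restrict {n : ℕ} {i j : ℤ} {δ : ℤ × ℤ} (s : Fin (n + 1) → ℤ × ℤ)
    (h : Cond (n + 1) i j s) (hlast : s (Fin.last n) = δ) :
    Cond n (i - δ.1) (j - δ.2) (fun l => s l.castSucc) := by
  obtain ⟨h1, h2, h3⟩ := h
  have htot : (∑ l : Fin n, s l.castSucc) = (i - δ.1, j - δ.2) := by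
    have : (∑ l : Fin n, s l.castSucc) = (i, j) - δ := by
      rw [eq_sub_iff_add_eq, ← hlast, ← Fin.sum_univ_castSucc, h3]
    rw [this]
    ext <;> simp
  refine ⟨fun l => h1 _, fun k => ?_, htot⟩
  show 0 ≤ (psum n (fun l => s l.castSucc) k).1 ∧ 0 ≤ (psum n (fun l => s l.castSucc) k).2
  by_cases hk : k ≤ n
  · have e : psum (n + 1) s k = psum n (fun l => s l.castSucc) k := by
      rw [psum_succ]
      simp [Nat.not_lt.mpr hk]
    rw [← e]
    exact h2 k
  · push_neg at hk
    rw [psum_ge n _ k (le_of_lt hk), ← psum_ge n _ n le_rfl]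
    have hk2 := h2 n
    change 0 ≤ (psum (n + 1) s n).1 ∧ 0 ≤ (psum (n + 1) s n).2 at hk2
    rw [psum_succ, if_neg (lt_irrefl n), add_zero] at hk2
    exact hk2

theorem cond_snoc {n : ℕ} {i j : ℤ} {δ : ℤ × ℤ} (hi : 0 ≤ i) (hj : 0 ≤ j) (hδ : δ ∈ Steps)
    (t : Fin n → ℤ × ℤ) (h : Cond n (i - δ.1) (j - δ.2) t) :
    Cond (n + 1) i j (Fin.snoc t δ) := by
  obtain ⟨h1, h2, h3⟩ := h
  have hcast : (fun l : Fin n => (Fin.snoc t δ : Fin (n+1) → ℤ × ℤ) l.castSucc) = t := by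
    funext l; simp [Fin.snoc_castSucc]
  have htot : (∑ l, (Fin.snoc t δ : Fin (n+1) → ℤ × ℤ) l) = (i, j) := by
    rw [Fin.sum_univ_castSucc, hcast, Fin.snoc_last, h3]
    ext <;> simp
  refine ⟨fun l => ?_, fun k => ?_, htot⟩
  · refine Fin.lastCases ?_ (fun l' => ?_) l
    · rw [Fin.snoc_last]; exact hδ
    · rw [Fin.snoc_castSucc]; exact h1 l'
  · show 0 ≤ (psum (n+1) (Fin.snoc t δ) k).1 ∧ 0 ≤ (psum (n+1) (Fin.snoc t δ) k).2
    by_cases hk : k ≤ n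
    · rw [psum_succ, if_neg (Nat.not_lt.mpr hk), add_zero, hcast]
      exact h2 k
    · push_neg at hk
      rw [psum_ge (n+1) _ k hk, htot]
      exact ⟨hi, hj⟩

noncomputable def stepEquiv (n : ℕ) (i j : ℤ) (hi : 0 ≤ i) (hj : 0 ≤ j) (δ : ℤ × ℤ)
    (hδ : δ ∈ Steps) :
    {s : Fin (n + 1) → ℤ × ℤ // Cond (n + 1) i j s ∧ s (Fin.last n) = δ} ≃
      {t : Fin n → ℤ × ℤ // Cond n (i - δ.1) (j - δ.2) t} where
  toFun s := ⟨fun l => s.1 l.castSucc, cond_restrict s.1 s.2.1 s.2.2⟩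
  invFun t := ⟨Fin.snoc t.1 δ, cond_snoc hi hj hδ t.1 t.2, Fin.snoc_last _ _⟩
  left_inv s := by
    apply Subtype.ext
    have h := Fin.snoc_init_self s.1
    rw [s.2.2] at h
    exact h
  right_inv t := by
    apply Subtype.ext
    funext l
    simp [Fin.snoc_castSucc]

theorem W_succ (n : ℕ) (i j : ℤ) (hi : 0 ≤ i) (hj : 0 ≤ j) :
    W (n + 1) i j = W n (i - 1) (j + 1) + W n (i + 1) j + W n i (j - 1) := by
  classical
  have e0 : ∀ s : Fin (n + 1) → ℤ × ℤ, Cond (n + 1) i j s ↔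
      ((Cond (n + 1) i j s ∧ s (Fin.last n) = (1, -1)) ∨
       ((Cond (n + 1) i j s ∧ s (Fin.last n) = (-1, 0)) ∨
        (Cond (n + 1) i j s ∧ s (Fin.last n) = (0, 1)))) := by
    intro s
    constructor
    · intro h
      have := h.1 (Fin.last n)
      simp only [Steps, Set.mem_insert_iff, Set.mem_singleton_iff] at this
      tauto
    · tauto
  have d1 : Disjoint (fun s : Fin (n + 1) → ℤ × ℤ => Cond (n + 1) i j s ∧ s (Fin.last n) = (1, -1))
      (fun s => (Cond (n + 1) i j s ∧ s (Fin.last n) = (-1, 0)) ∨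
        (Cond (n + 1) i j s ∧ s (Fin.last n) = (0, 1))) := by
    rw [Pi.disjoint_iff]
    intro s
    rw [disjoint_iff_inf_le]
    rintro ⟨⟨_, ha⟩, hb | hb⟩ <;> rw [ha] at hb <;> exact absurd hb.2 (by norm_num)
  have d2 : Disjoint (fun s : Fin (n + 1) → ℤ × ℤ => Cond (n + 1) i j s ∧ s (Fin.last n) = (-1, 0))
      (fun s => Cond (n + 1) i j s ∧ s (Fin.last n) = (0, 1)) := by
    rw [Pi.disjoint_iff]
    intro s
    rw [disjoint_iff_inf_le]
    rintro ⟨⟨_, ha⟩, hb⟩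
    rw [ha] at hb
    exact absurd hb.2 (by norm_num)
  have fin1 : Finite {s : Fin (n+1) → ℤ × ℤ // Cond (n + 1) i j s ∧ s (Fin.last n) = (1, -1)} :=
    finite_subtype _ (fun _ h => h.1.1)
  have fin2 : Finite {s : Fin (n+1) → ℤ × ℤ // Cond (n + 1) i j s ∧ s (Fin.last n) = (-1, 0)} :=
    finite_subtype _ (fun _ h => h.1.1)
  have fin3 : Finite {s : Fin (n+1) → ℤ × ℤ // Cond (n + 1) i j s ∧ s (Fin.last n) = (0, 1)} :=
    finite_subtype _ (fun _ h => h.1.1)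
  have fin23 : Finite {s : Fin (n+1) → ℤ × ℤ //
      (Cond (n + 1) i j s ∧ s (Fin.last n) = (-1, 0)) ∨
      (Cond (n + 1) i j s ∧ s (Fin.last n) = (0, 1))} := by
    apply finite_subtype
    rintro s (h | h) <;> exact h.1.1
  have key : W (n + 1) i j =
      Nat.card {s : Fin (n+1) → ℤ × ℤ // Cond (n + 1) i j s ∧ s (Fin.last n) = (1, -1)} +
      (Nat.card {s : Fin (n+1) → ℤ × ℤ // Cond (n + 1) i j s ∧ s (Fin.last n) = (-1, 0)} +
       Nat.card {s : Fin (n+1) → ℤ × ℤ // Cond (n + 1) i j s ∧ s (Fin.last n) = (0, 1)}) := by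
    unfold W
    rw [Nat.card_congr (Equiv.subtypeEquivRight e0)]
    rw [Nat.card_congr (subtypeOrEquiv _ _ d1), Nat.card_sum]
    rw [Nat.card_congr (subtypeOrEquiv _ _ d2), Nat.card_sum]
  rw [key]
  have c1 : Nat.card {s : Fin (n+1) → ℤ × ℤ // Cond (n + 1) i j s ∧ s (Fin.last n) = (1, -1)}
      = W n (i - 1) (j + 1) := by
    rw [Nat.card_congr (stepEquiv n i j hi hj (1, -1) (by simp [Steps]))]
    unfold W
    norm_num
  have c2 : Nat.card {s : Fin (n+1) → ℤ × ℤ // Cond (n + 1) i j s ∧ s (Fin.last n) = (-1, 0)}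
      = W n (i + 1) j := by
    rw [Nat.card_congr (stepEquiv n i j hi hj (-1, 0) (by simp [Steps]))]
    unfold W
    norm_num
  have c3 : Nat.card {s : Fin (n+1) → ℤ × ℤ // Cond (n + 1) i j s ∧ s (Fin.last n) = (0, 1)}
      = W n i (j - 1) := by
    rw [Nat.card_congr (stepEquiv n i j hi hj (0, 1) (by simp [Steps]))]
    unfold W
    norm_num
  rw [c1, c2, c3]
  ring

noncomputable def F (m i j : ℕ) : ℚ :=
  ((i : ℚ) + 1) * ((j : ℚ) + 1) * ((i : ℚ) + (j : ℚ) + 2) *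
    (Nat.factorial (3 * m + 2 * i + j)) /
    (Nat.factorial m * Nat.factorial (m + i + 1) * Nat.factorial (m + i + j + 2))

set_option maxHeartbeats 1000000 in
theorem key111 (c a b : ℕ) :
    F (c+1) (a+1) (b+1) = F (c+1) a (b+2) + F c (a+2) (b+1) + F (c+1) (a+1) b := by
  unfold F
  rw [show 3*(c+1)+2*(a+1)+(b+1) = (3*c+2*a+b+5)+1 by ring,
      show 3*(c+1)+2*a+(b+2) = 3*c+2*a+b+5 by ring,
      show 3*c+2*(a+2)+(b+1) = 3*c+2*a+b+5 by ring,
      show 3*(c+1)+2*(a+1)+b = 3*c+2*a+b+5 by ring,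
      show (c+1)+(a+1)+1 = (c+a+2)+1 by ring,
      show c+(a+2)+1 = (c+a+2)+1 by ring,
      show (c+1)+a+1 = c+a+2 by ring,
      show (c+1)+(a+1)+(b+1)+2 = (c+a+b+4)+1 by ring,
      show (c+1)+a+(b+2)+2 = (c+a+b+4)+1 by ring,
      show c+(a+2)+(b+1)+2 = (c+a+b+4)+1 by ring,
      show (c+1)+(a+1)+b+2 = c+a+b+4 by ring,
      Nat.factorial_succ (3*c+2*a+b+5), Nat.factorial_succ (c+a+2),
      Nat.factorial_succ (c+a+b+4), Nat.factorial_succ c]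
  push_cast
  generalize hC : ((Nat.factorial c : ℚ)) = C
  generalize hB : ((Nat.factorial (c+a+2) : ℚ)) = B
  generalize hA : ((Nat.factorial (c+a+b+4) : ℚ)) = A
  generalize hD : ((Nat.factorial (3*c+2*a+b+5) : ℚ)) = D
  have hC0 : C ≠ 0 := hC ▸ Nat.cast_ne_zero.mpr (Nat.factorial_ne_zero _)
  have hB0 : B ≠ 0 := hB ▸ Nat.cast_ne_zero.mpr (Nat.factorial_ne_zero _)
  have hA0 : A ≠ 0 := hA ▸ Nat.cast_ne_zero.mpr (Nat.factorial_ne_zero _)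
  have h1 : ((c:ℚ) + 1) ≠ 0 := by positivity
  have h2 : ((c:ℚ) + (a:ℚ) + 2 + 1) ≠ 0 := by positivity
  have h3 : ((c:ℚ) + (a:ℚ) + (b:ℚ) + 4 + 1) ≠ 0 := by positivity
  field_simp
  ring

set_option maxHeartbeats 1000000 in
theorem key011 (c b : ℕ) : F (c+1) 0 (b+1) = F c 1 (b+1) + F (c+1) 0 b := by
  unfold F
  rw [show 3*(c+1)+2*0+(b+1) = (3*c+b+3)+1 by ring,
      show 3*c+2*1+(b+1) = 3*c+b+3 by ring,
      show 3*(c+1)+2*0+b = 3*c+b+3 by ring,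
      show c+1+0+1 = (c+1)+1 by ring,
      show c+1+0+(b+1)+2 = (c+b+3)+1 by ring,
      show c+1+0+b+2 = c+b+3 by ring,
      Nat.factorial_succ (3*c+b+3), Nat.factorial_succ (c+1),
      Nat.factorial_succ c, Nat.factorial_succ (c+b+3)]
  push_cast
  generalize hC : ((Nat.factorial c : ℚ)) = C
  generalize hA : ((Nat.factorial (c+b+3) : ℚ)) = A
  generalize hD : ((Nat.factorial (3*c+b+3) : ℚ)) = D
  have hC0 : C ≠ 0 := hC ▸ Nat.cast_ne_zero.mpr (Nat.factorial_ne_zero _)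
  have hA0 : A ≠ 0 := hA ▸ Nat.cast_ne_zero.mpr (Nat.factorial_ne_zero _)
  have h1 : ((c:ℚ) + 1) ≠ 0 := by positivity
  have h2 : ((c:ℚ) + 1 + 1) ≠ 0 := by positivity
  have h3 : ((c:ℚ) + (b:ℚ) + 3 + 1) ≠ 0 := by positivity
  field_simp
  ring

set_option maxHeartbeats 1000000 in
theorem key101 (a b : ℕ) : F 0 (a+1) (b+1) = F 0 a (b+2) + F 0 (a+1) b := by
  unfold F
  rw [show 3*0+2*(a+1)+(b+1) = (2*a+b+2)+1 by ring,
      show 3*0+2*a+(b+2) = 2*a+b+2 by ring,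
      show 3*0+2*(a+1)+b = 2*a+b+2 by ring,
      show 0+(a+1)+1 = (a+1)+1 by ring,
      show 0+(a+1)+(b+1)+2 = (a+b+3)+1 by ring,
      show 0+a+(b+2)+2 = (a+b+3)+1 by ring,
      show 0+a+1 = a+1 by ring,
      show 0+(a+1)+b+2 = a+b+3 by ring,
      Nat.factorial_succ (2*a+b+2), Nat.factorial_succ (a+1),
      Nat.factorial_succ a, Nat.factorial_succ (a+b+3), Nat.factorial_zero]
  push_cast
  generalize hC : ((Nat.factorial a : ℚ)) = C
  generalize hA : ((Nat.factorial (a+b+3) : ℚ)) = A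
  generalize hD : ((Nat.factorial (2*a+b+2) : ℚ)) = D
  have hC0 : C ≠ 0 := hC ▸ Nat.cast_ne_zero.mpr (Nat.factorial_ne_zero _)
  have hA0 : A ≠ 0 := hA ▸ Nat.cast_ne_zero.mpr (Nat.factorial_ne_zero _)
  have h1 : ((a:ℚ) + 1) ≠ 0 := by positivity
  have h2 : ((a:ℚ) + 1 + 1) ≠ 0 := by positivity
  have h3 : ((a:ℚ) + (b:ℚ) + 3 + 1) ≠ 0 := by positivity
  field_simp
  ring

set_option maxHeartbeats 1000000 in
theorem key110 (c a : ℕ) : F (c+1) (a+1) 0 = F (c+1) a 1 + F c (a+2) 0 := by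
  unfold F
  rw [show 3*(c+1)+2*(a+1)+0 = (3*c+2*a+4)+1 by ring,
      show 3*(c+1)+2*a+1 = 3*c+2*a+4 by ring,
      show 3*c+2*(a+2)+0 = 3*c+2*a+4 by ring,
      show c+1+(a+1)+1 = (c+a+2)+1 by ring,
      show c+(a+2)+1 = (c+a+2)+1 by ring,
      show c+1+a+1 = c+a+2 by ring,
      show c+1+(a+1)+0+2 = c+a+4 by ring,
      show c+a+2+2 = c+a+4 by ring,
      show c+(a+2)+0+2 = c+a+4 by ring,
      Nat.factorial_succ (3*c+2*a+4), Nat.factorial_succ (c+a+2),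
      Nat.factorial_succ c]
  push_cast
  generalize hC : ((Nat.factorial c : ℚ)) = C
  generalize hB : ((Nat.factorial (c+a+2) : ℚ)) = B
  generalize hA : ((Nat.factorial (c+a+4) : ℚ)) = A
  generalize hD : ((Nat.factorial (3*c+2*a+4) : ℚ)) = D
  have hC0 : C ≠ 0 := hC ▸ Nat.cast_ne_zero.mpr (Nat.factorial_ne_zero _)
  have hB0 : B ≠ 0 := hB ▸ Nat.cast_ne_zero.mpr (Nat.factorial_ne_zero _)
  have hA0 : A ≠ 0 := hA ▸ Nat.cast_ne_zero.mpr (Nat.factorial_ne_zero _)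
  have h1 : ((c:ℚ) + 1) ≠ 0 := by positivity
  have h2 : ((c:ℚ) + (a:ℚ) + 2 + 1) ≠ 0 := by positivity
  field_simp
  ring

set_option maxHeartbeats 1000000 in
theorem key001 (b : ℕ) : F 0 0 (b+1) = F 0 0 b := by
  unfold F
  rw [show 3*0+2*0+(b+1) = b+1 by ring,
      show 3*0+2*0+b = b by ring,
      show 0+0+1 = 1 by ring,
      show b+1+2 = (b+2)+1 by ring,
      Nat.factorial_succ b, Nat.factorial_succ (b+2),
      Nat.factorial_zero, Nat.factorial_one]
  push_cast
  generalize hC : ((Nat.factorial b : ℚ)) = C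
  generalize hA : ((Nat.factorial (b+2) : ℚ)) = A
  have hC0 : C ≠ 0 := hC ▸ Nat.cast_ne_zero.mpr (Nat.factorial_ne_zero _)
  have hA0 : A ≠ 0 := hA ▸ Nat.cast_ne_zero.mpr (Nat.factorial_ne_zero _)
  have h1 : ((b:ℚ) + 1) ≠ 0 := by positivity
  have h2 : ((b:ℚ) + 2 + 1) ≠ 0 := by positivity
  field_simp
  ring

set_option maxHeartbeats 1000000 in
theorem key010 (a : ℕ) : F 0 (a+1) 0 = F 0 a 1 := by
  unfold F
  rw [show 3*0+2*(a+1)+0 = (2*a+1)+1 by ring,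
      show 3*0+2*a+1 = 2*a+1 by ring,
      show 0+(a+1)+1 = (a+1)+1 by ring,
      show 0+a+1 = a+1 by ring,
      show 0+(a+1)+0+2 = a+3 by ring,
      show a+1+2 = a+3 by ring,
      Nat.factorial_succ (2*a+1), Nat.factorial_succ (a+1),
      Nat.factorial_succ a, Nat.factorial_zero]
  push_cast
  generalize hC : ((Nat.factorial a : ℚ)) = C
  generalize hA : ((Nat.factorial (a+3) : ℚ)) = A
  generalize hD : ((Nat.factorial (2*a+1) : ℚ)) = D
  have hC0 : C ≠ 0 := hC ▸ Nat.cast_ne_zero.mpr (Nat.factorial_ne_zero _)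
  have hA0 : A ≠ 0 := hA ▸ Nat.cast_ne_zero.mpr (Nat.factorial_ne_zero _)
  have h1 : ((a:ℚ) + 1) ≠ 0 := by positivity
  have h2 : ((a:ℚ) + 1 + 1) ≠ 0 := by positivity
  field_simp
  ring

set_option maxHeartbeats 1000000 in
theorem key100 (c : ℕ) : F (c+1) 0 0 = F c 1 0 := by
  unfold F
  rw [show 3*(c+1)+2*0+0 = (3*c+2)+1 by ring,
      show 3*c+2*1+0 = 3*c+2 by ring,
      show c+1+0+1 = (c+1)+1 by ring,
      show c+1+0+0+2 = c+3 by ring,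
      show c+1+0+2 = c+3 by ring,
      Nat.factorial_succ (3*c+2), Nat.factorial_succ (c+1),
      Nat.factorial_succ c]
  push_cast
  generalize hC : ((Nat.factorial c : ℚ)) = C
  generalize hA : ((Nat.factorial (c+3) : ℚ)) = A
  generalize hD : ((Nat.factorial (3*c+2) : ℚ)) = D
  have hC0 : C ≠ 0 := hC ▸ Nat.cast_ne_zero.mpr (Nat.factorial_ne_zero _)
  have hA0 : A ≠ 0 := hA ▸ Nat.cast_ne_zero.mpr (Nat.factorial_ne_zero _)
  have h1 : ((c:ℚ) + 1) ≠ 0 := by positivity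
  have h2 : ((c:ℚ) + 1 + 1) ≠ 0 := by positivity
  field_simp
  ring


set_option maxHeartbeats 1000000 in
theorem main : ∀ n m i j : ℕ, 3 * m + 2 * i + j = n → ((W n (i : ℤ) (j : ℤ) : ℕ) : ℚ) = F m i j := by
  intro n
  induction n with
  | zero =>
    intro m i j h
    have hm : m = 0 := by omega
    have hi : i = 0 := by omega
    have hj : j = 0 := by omega
    subst hm; subst hi; subst hj
    simp only [Nat.cast_zero]
    rw [W_zero]
    norm_num [F, Nat.factorial]
  | succ n ih =>
    intro m i j h
    have hrec := W_succ n (i : ℤ) (j : ℤ) (by positivity) (by positivity)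
    rw [hrec]
    rcases m with _ | c <;> rcases i with _ | a <;> rcases j with _ | b <;> push_cast
    · omega
    · -- m=0, i=0, j=b+1
      have z1 := W_eq_zero_of_neg n (-1) ((b:ℤ)+1+1) (Or.inl (by norm_num))
      have z2 := W_eq_zero_of_big n 1 ((b:ℤ)+1) (by omega)
      have t3 := ih 0 0 b (by omega)
      push_cast at t3
      rw [show ((b:ℤ)+1-1) = (b:ℤ) by ring, z1, z2, t3]
      simp only [Nat.cast_zero, zero_add]
      exact (key001 b).symm
    · -- m=0, i=a+1, j=0
      have z3 := W_eq_zero_of_neg n ((a:ℤ)+1) (-1) (Or.inr (by norm_num))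
      have z2 := W_eq_zero_of_big n ((a:ℤ)+1+1) 0 (by omega)
      have t1 := ih 0 a 1 (by omega)
      push_cast at t1
      rw [show ((a:ℤ)+1-1) = (a:ℤ) by ring, t1, z2, z3]
      simp only [Nat.cast_zero, add_zero]
      exact (key010 a).symm
    · -- m=0, i=a+1, j=b+1
      have z2 := W_eq_zero_of_big n ((a:ℤ)+1+1) ((b:ℤ)+1) (by omega)
      have t1 := ih 0 a (b+2) (by omega)
      have t3 := ih 0 (a+1) b (by omega)
      push_cast at t1 t3
      rw [show ((a:ℤ)+1-1) = (a:ℤ) by ring, show ((b:ℤ)+1+1) = (b:ℤ)+2 by ring, show ((b:ℤ)+1-1) = (b:ℤ) by ring, t1, z2, t3]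
      simp only [Nat.cast_zero, add_zero, zero_add]
      exact (key101 a b).symm
    · -- m=c+1, i=0, j=0
      have z1 := W_eq_zero_of_neg n (-1) 1 (Or.inl (by norm_num))
      have z3 := W_eq_zero_of_neg n 0 (-1) (Or.inr (by norm_num))
      have t2 := ih c 1 0 (by omega)
      push_cast at t2
      rw [z1, z3, t2]
      simp only [Nat.cast_zero, zero_add, add_zero]
      exact (key100 c).symm
    · -- m=c+1, i=0, j=b+1
      have z1 := W_eq_zero_of_neg n (-1) ((b:ℤ)+1+1) (Or.inl (by norm_num))
      have t2 := ih c 1 (b+1) (by omega)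
      have t3 := ih (c+1) 0 b (by omega)
      push_cast at t2 t3
      rw [show ((b:ℤ)+1-1) = (b:ℤ) by ring, z1, t2, t3]
      simp only [Nat.cast_zero, zero_add]
      exact (key011 c b).symm
    · -- m=c+1, i=a+1, j=0
      have z3 := W_eq_zero_of_neg n ((a:ℤ)+1) (-1) (Or.inr (by norm_num))
      have t1 := ih (c+1) a 1 (by omega)
      have t2 := ih c (a+2) 0 (by omega)
      push_cast at t1 t2
      rw [show ((a:ℤ)+1-1) = (a:ℤ) by ring, show ((a:ℤ)+1+1) = (a:ℤ)+2 by ring, t1, t2, z3]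
      simp only [Nat.cast_zero, add_zero]
      exact (key110 c a).symm
    · -- m=c+1, i=a+1, j=b+1
      have t1 := ih (c+1) a (b+2) (by omega)
      have t2 := ih c (a+2) (b+1) (by omega)
      have t3 := ih (c+1) (a+1) b (by omega)
      push_cast at t1 t2 t3
      rw [show ((a:ℤ)+1-1) = (a:ℤ) by ring, show ((b:ℤ)+1+1) = (b:ℤ)+2 by ring, show ((a:ℤ)+1+1) = (a:ℤ)+2 by ring, show ((b:ℤ)+1-1) = (b:ℤ) by ring, t1, t2, t3]
      exact (key111 c a b).symm

end TandemWalk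

open TandemWalk in
/-- The number of quadrant walks of length `n = 3m + 2i + j` from `(0,0)` to `(i,j)`
with steps `(1,-1)`, `(-1,0)`, `(0,1)` equals
`(i+1)(j+1)(i+j+2)·(3m+2i+j)!/(m!(m+i+1)!(m+i+j+2)!)`. -/
theorem count_1tandem_quadrant_walks (m i j : ℕ) :
    (Nat.card {s : Fin (3 * m + 2 * i + j) → ℤ × ℤ //
        (∀ l, s l ∈ ({(1, -1), (-1, 0), (0, 1)} : Set (ℤ × ℤ))) ∧
        (∀ k : ℕ,
          0 ≤ (∑ l ∈ univ.filter (fun l : Fin (3 * m + 2 * i + j) => (l : ℕ) < k), s l).1 ∧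
          0 ≤ (∑ l ∈ univ.filter (fun l : Fin (3 * m + 2 * i + j) => (l : ℕ) < k), s l).2) ∧
        (∑ l, s l) = ((i : ℤ), (j : ℤ))} : ℚ)
      = ((i : ℚ) + 1) * ((j : ℚ) + 1) * ((i : ℚ) + (j : ℚ) + 2) *
          (Nat.factorial (3 * m + 2 * i + j)) /
          (Nat.factorial m * Nat.factorial (m + i + 1) * Nat.factorial (m + i + j + 2)) := by
  exact main (3 * m + 2 * i + j) m i j rfl
end

section
/- For the tandem step polynomial S(x,y) = x/y + Σ_{r=0}^{p} z_r Σ_{i=0}^{r} x^{−(r−i)} y^{i}, the identity x·(S(x,y) − S(X,y))/(x − X) = −(1/X)·(S(x,y) − S(x,1/X))/(y − 1/X) holds in the field of rational functions in x, X, y over ℚ(z_0, …, z_p). -/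
open Finset

private def T {F : Type*} [Field F] (a b : F) (r : ℕ) : F :=
  ∑ i ∈ range (r + 1), (a⁻¹) ^ (r - i) * b ^ i

private lemma T_succ {F : Type*} [Field F] (a b : F) (r : ℕ) :
    T a b (r + 1) = a⁻¹ * T a b r + b ^ (r + 1) := by
  unfold T
  rw [Finset.sum_range_succ, Finset.mul_sum, Nat.sub_self, pow_zero, one_mul]
  congr 1
  refine Finset.sum_congr rfl fun i hi => ?_
  have h : r + 1 - i = (r - i) + 1 := by
    have := Finset.mem_range.mp hi; omega
  rw [h, pow_succ]; ring

private lemma T_key {F : Type*} [Field F] (X y : F) (hX : X ≠ 0) (r : ℕ) :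
    (X * y - 1) * T X y r = X * y ^ (r + 1) - (X⁻¹) ^ r := by
  induction r with
  | zero => simp [T]
  | succ r ih =>
    rw [T_succ]
    have hX1 : X * X⁻¹ = 1 := mul_inv_cancel₀ hX
    linear_combination X⁻¹ * ih + y ^ (r + 1) * hX1

private lemma T_dd {F : Type*} [Field F] (x X y : F) (hx : x ≠ 0) (hX : X ≠ 0) (r : ℕ) :
    x * (X * y - 1) * (T x y r - T X y r) = (X - x) * (T x y r - T x X⁻¹ r) := by
  induction r with
  | zero => simp [T]
  | succ r ih =>
    rw [T_succ, T_succ, T_succ]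
    have hx1 : x * x⁻¹ = 1 := mul_inv_cancel₀ hx
    have hX1 : X * X⁻¹ = 1 := mul_inv_cancel₀ hX
    have key := T_key X y hX r
    linear_combination x⁻¹ * ih + (x * x⁻¹ - x * X⁻¹) * key +
      ((X⁻¹) ^ r - x * y ^ (r + 1)) * hX1 + (X * y ^ (r + 1) - (X⁻¹) ^ r) * hx1

/-- For the tandem step polynomial `S`, the divided-difference identity
`x (S(x,y) - S(X,y))/(x - X) = -(1/X) (S(x,y) - S(x,1/X))/(y - 1/X)` holds. -/
theorem tandem_S_divided_difference (F : Type*) [Field F] (p : ℕ) (z : ℕ → F)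
    (x X y : F) (hx : x ≠ 0) (hX : X ≠ 0) (hy : y ≠ 0)
    (hxX : x ≠ X) (hyX : y ≠ X⁻¹) :
    let S : F → F → F := fun a b =>
      a * b⁻¹ + ∑ r ∈ range (p + 1), z r * ∑ i ∈ range (r + 1), (a⁻¹) ^ (r - i) * b ^ i
    x * ((S x y - S X y) / (x - X)) = -X⁻¹ * ((S x y - S x X⁻¹) / (y - X⁻¹)) := by
  intro S
  have hD : x - X ≠ 0 := sub_ne_zero.mpr hxX
  have hE : y - X⁻¹ ≠ 0 := sub_ne_zero.mpr hyX
  have hy1 : y * y⁻¹ = 1 := mul_inv_cancel₀ hy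
  have hX1 : X * X⁻¹ = 1 := mul_inv_cancel₀ hX
  have hS : ∀ a b : F, S a b = a * b⁻¹ + ∑ r ∈ range (p + 1), z r * T a b r := by
    intro a b; rfl
  have hterm : ∀ r : ℕ, x * (y - X⁻¹) * (z r * T x y r - z r * T X y r)
      = -X⁻¹ * (x - X) * (z r * T x y r - z r * T x X⁻¹ r) := by
    intro r
    linear_combination X⁻¹ * z r * T_dd x X y hx hX r
      - z r * x * y * (T x y r - T X y r) * hX1
  have hsums : x * (y - X⁻¹) *
        ((∑ r ∈ range (p + 1), z r * T x y r) - ∑ r ∈ range (p + 1), z r * T X y r)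
      = -X⁻¹ * (x - X) *
        ((∑ r ∈ range (p + 1), z r * T x y r) - ∑ r ∈ range (p + 1), z r * T x X⁻¹ r) := by
    rw [← Finset.sum_sub_distrib, ← Finset.sum_sub_distrib, Finset.mul_sum, Finset.mul_sum]
    exact Finset.sum_congr rfl fun r _ => hterm r
  have h : x * (y - X⁻¹) * (S x y - S X y)
      = -X⁻¹ * (x - X) * (S x y - S x X⁻¹) := by
    rw [hS, hS, hS, inv_inv]
    linear_combination hsums + x * (x - X) * hy1 - x * (x - X) * hX1
  rw [mul_div_assoc', mul_div_assoc', div_eq_div_iff hD hE]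
  linear_combination h
end

section
/- In the ring of formal power series in ȳ = 1/y over ℚ(z_1, …, z_p, x) with z_p invertible, the equation Σ_{ℓ=1}^{p−1} ȳ^ℓ Σ_{i+j ≤ ℓ} z_{i+j+p−ℓ} x^{−i} B^{j+1} + z_p B = x ȳ^p has a unique solution B (a power series in ȳ), and B = (x/z_p)·ȳ^p·(1 + O(ȳ)). -/
open Finset PowerSeries

/-- The defining equation for the reciprocal `B = 1/x₁` of the distinguished root `x₁`:
`Σ_{ℓ=1}^{p-1} ȳ^ℓ Σ_{i+j≤ℓ} z_{i+j+p-ℓ} x^{-i} B^{j+1} + z_p B = x ȳ^p`,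
as an equation of formal power series in `ȳ`. -/
def x1RecipEqn {F : Type*} [Field F] (p : ℕ) (z : ℕ → F) (x : F)
    (B : PowerSeries F) : Prop :=
  (∑ l ∈ Icc 1 (p - 1), (PowerSeries.X : PowerSeries F) ^ l *
      ∑ i ∈ range (l + 1), ∑ j ∈ range (l - i + 1),
        PowerSeries.C (R := F) (z (i + j + p - l) * (x⁻¹) ^ i) * B ^ (j + 1))
    + PowerSeries.C (R := F) (z p) * B = PowerSeries.C (R := F) x * PowerSeries.X ^ p

section Aux

variable {F : Type*} [Field F]

/-- The nonlinear sum part of the equation. -/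
noncomputable def x1RecipS (p : ℕ) (z : ℕ → F) (x : F) (f : PowerSeries F) : PowerSeries F :=
  ∑ l ∈ Icc 1 (p - 1), (PowerSeries.X : PowerSeries F) ^ l *
      ∑ i ∈ range (l + 1), ∑ j ∈ range (l - i + 1),
        PowerSeries.C (R := F) (z (i + j + p - l) * (x⁻¹) ^ i) * f ^ (j + 1)

lemma x1RecipEqn_iff (p : ℕ) (z : ℕ → F) (x : F) (B : PowerSeries F) :
    x1RecipEqn p z x B ↔
      x1RecipS p z x B + PowerSeries.C (R := F) (z p) * B = PowerSeries.C (R := F) x * PowerSeries.X ^ p :=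
  Iff.rfl

lemma x1RecipS_key (p : ℕ) (z : ℕ → F) (x : F) (n : ℕ) (f g : PowerSeries F)
    (h : ∀ m, m < n → PowerSeries.coeff (R := F) m f = PowerSeries.coeff (R := F) m g) :
    PowerSeries.coeff (R := F) n (x1RecipS p z x f) = PowerSeries.coeff (R := F) n (x1RecipS p z x g) := by
  have hfg : (PowerSeries.X : PowerSeries F) ^ n ∣ f - g := by
    rw [PowerSeries.X_pow_dvd_iff]
    intro m hm
    simp [h m hm]
  have hd : (PowerSeries.X : PowerSeries F) ^ (n + 1) ∣ x1RecipS p z x f - x1RecipS p z x g := by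
    unfold x1RecipS
    rw [← Finset.sum_sub_distrib]
    refine Finset.dvd_sum (fun l hl => ?_)
    rw [← mul_sub, ← Finset.sum_sub_distrib]
    have hl1 : 1 ≤ l := (Finset.mem_Icc.mp hl).1
    rw [show n + 1 = 1 + n from Nat.add_comm n 1, pow_add]
    refine mul_dvd_mul (pow_dvd_pow _ hl1) ?_
    refine Finset.dvd_sum (fun i _ => ?_)
    rw [← Finset.sum_sub_distrib]
    refine Finset.dvd_sum (fun j _ => ?_)
    rw [← mul_sub]
    exact Dvd.dvd.mul_left (hfg.trans (sub_dvd_pow_sub_pow f g (j + 1))) _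
  have := (PowerSeries.X_pow_dvd_iff.mp hd) n (Nat.lt_succ_self n)
  rw [map_sub, sub_eq_zero] at this
  exact this

lemma x1RecipS_zero (p : ℕ) (z : ℕ → F) (x : F) : x1RecipS p z x 0 = 0 := by
  unfold x1RecipS
  simp

variable (p : ℕ) (z : ℕ → F) (x : F)

/-- The coefficients of the solution, defined by strong recursion. -/
noncomputable def x1RecipCoef : ℕ → F
  | n => ((if n = p then x else 0) -
      PowerSeries.coeff (R := F) n (x1RecipS p z x
        (PowerSeries.mk fun m => if h : m < n then x1RecipCoef m else 0))) / z p
  decreasing_by exact h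

end Aux

/-- The equation defining `B = 1/x₁` has a unique power series solution in `ȳ`, and
this solution satisfies `B = (x/z_p) ȳ^p (1 + O(ȳ))`: its coefficients below `ȳ^p`
vanish, and the coefficient of `ȳ^p` is `x/z_p`. -/
theorem x1_reciprocal_exists_unique (F : Type*) [Field F] (p : ℕ) (hp : 1 ≤ p)
    (z : ℕ → F) (hzp : z p ≠ 0) (x : F) :
    (∃! B : PowerSeries F, x1RecipEqn p z x B) ∧
    (∀ B : PowerSeries F, x1RecipEqn p z x B →
      (∀ m : ℕ, m < p → PowerSeries.coeff (R := F) m B = 0) ∧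
      PowerSeries.coeff (R := F) p B = x / z p) := by
  have coeff_rhs : ∀ n : ℕ, PowerSeries.coeff (R := F) n (PowerSeries.C (R := F) x * PowerSeries.X ^ p)
      = if n = p then x else 0 := by
    intro n
    rw [PowerSeries.coeff_C_mul, PowerSeries.coeff_X_pow]
    split <;> simp_all
  -- the constructed solution
  set B₀ : PowerSeries F := PowerSeries.mk (x1RecipCoef p z x) with hB₀
  have hB₀eqn : x1RecipEqn p z x B₀ := by
    rw [x1RecipEqn_iff]
    ext n
    rw [map_add, coeff_rhs, PowerSeries.coeff_C_mul]
    have hkey : PowerSeries.coeff (R := F) n (x1RecipS p z x B₀)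
        = PowerSeries.coeff (R := F) n (x1RecipS p z x
            (PowerSeries.mk fun m => if h : m < n then x1RecipCoef p z x m else 0)) := by
      refine x1RecipS_key p z x n _ _ (fun m hm => ?_)
      simp [hB₀, hm]
    rw [hkey]
    have hcoef : PowerSeries.coeff (R := F) n B₀ = x1RecipCoef p z x n := by simp [hB₀]
    rw [hcoef, x1RecipCoef]
    field_simp
    ring
  -- uniqueness
  have huniq : ∀ B B' : PowerSeries F, x1RecipEqn p z x B → x1RecipEqn p z x B' → B = B' := by
    intro B B' hB hB'
    rw [x1RecipEqn_iff] at hB hB'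
    ext n
    induction n using Nat.strong_induction_on with
    | _ n ih =>
      have h1 := congrArg (PowerSeries.coeff (R := F) n) hB
      have h2 := congrArg (PowerSeries.coeff (R := F) n) hB'
      rw [map_add, PowerSeries.coeff_C_mul] at h1 h2
      have hS : PowerSeries.coeff (R := F) n (x1RecipS p z x B)
          = PowerSeries.coeff (R := F) n (x1RecipS p z x B') := x1RecipS_key p z x n _ _ ih
      rw [hS] at h1
      exact mul_left_cancel₀ hzp (add_left_cancel (h1.trans h2.symm))
  -- coefficient facts
  have hcoefs : ∀ B : PowerSeries F, x1RecipEqn p z x B →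
      (∀ m : ℕ, m < p → PowerSeries.coeff (R := F) m B = 0) ∧
      PowerSeries.coeff (R := F) p B = x / z p := by
    intro B hB
    rw [x1RecipEqn_iff] at hB
    have hlow : ∀ m : ℕ, m < p → PowerSeries.coeff (R := F) m B = 0 := by
      intro m hm
      induction m using Nat.strong_induction_on with
      | _ m ih =>
        have h1 := congrArg (PowerSeries.coeff (R := F) m) hB
        rw [map_add, PowerSeries.coeff_C_mul, coeff_rhs, if_neg (Nat.ne_of_lt hm)] at h1
        have hS : PowerSeries.coeff (R := F) m (x1RecipS p z x B)
            = PowerSeries.coeff (R := F) m (x1RecipS p z x 0) :=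
          x1RecipS_key p z x m _ _ (fun k hk => by
            rw [ih k hk (hk.trans hm)]; simp)
        rw [hS, x1RecipS_zero, map_zero, zero_add] at h1
        exact (mul_eq_zero.mp h1).resolve_left hzp
    refine ⟨hlow, ?_⟩
    have h1 := congrArg (PowerSeries.coeff (R := F) p) hB
    rw [map_add, PowerSeries.coeff_C_mul, coeff_rhs, if_pos rfl] at h1
    have hS : PowerSeries.coeff (R := F) p (x1RecipS p z x B)
        = PowerSeries.coeff (R := F) p (x1RecipS p z x 0) :=
      x1RecipS_key p z x p _ _ (fun k hk => by rw [hlow k hk]; simp)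
    rw [hS, x1RecipS_zero, map_zero, zero_add] at h1
    rw [eq_div_iff hzp]
    linear_combination h1
  exact ⟨⟨B₀, hB₀eqn, fun B hB => huniq B B₀ hB hB₀eqn⟩, hcoefs⟩
end

section
/- Let Ω ⊆ {3, 4, 5, …} be nonempty and finite, and let α > 0 be the unique positive real satisfying 1 = Σ_{s∈Ω} C(s−1, 2) α^{−s}. Then such α exists and is unique, and the quantity γ = Σ_{s∈Ω} C(s, 2) α^{−s+2} satisfies γ > 1. -/
open Finset

/-- For a nonempty finite set `Ω ⊆ {3,4,5,…}`, there is a unique `α > 0` with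
`1 = Σ_{s∈Ω} C(s-1,2) α^{-s}`, and for this `α` the growth rate
`γ = Σ_{s∈Ω} C(s,2) α^{-s+2}` satisfies `γ > 1`. -/
theorem growth_rate_gt_one (Ω : Finset ℕ) (hne : Ω.Nonempty) (hΩ : ∀ s ∈ Ω, 3 ≤ s) :
    (∃! α : ℝ, 0 < α ∧ 1 = ∑ s ∈ Ω, ((s - 1).choose 2 : ℝ) * (α ^ s)⁻¹) ∧
    (∀ α : ℝ, 0 < α → 1 = ∑ s ∈ Ω, ((s - 1).choose 2 : ℝ) * (α ^ s)⁻¹ →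
      1 < ∑ s ∈ Ω, (s.choose 2 : ℝ) * α ^ 2 * (α ^ s)⁻¹) := by
  set f : ℝ → ℝ := fun α => ∑ s ∈ Ω, ((s - 1).choose 2 : ℝ) * (α ^ s)⁻¹ with hf
  have hc1 : ∀ s ∈ Ω, (1:ℝ) ≤ ((s-1).choose 2 : ℝ) := by
    intro s hs
    have h3 := hΩ s hs
    have : 0 < (s-1).choose 2 := Nat.choose_pos (by omega)
    exact_mod_cast this
  -- strict antitonicity on positives
  have hanti : ∀ a b : ℝ, 0 < a → a < b → f b < f a := by
    intro a b ha hab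
    apply Finset.sum_lt_sum_of_nonempty hne
    intro s hs
    have hs3 := hΩ s hs
    have hpa : 0 < a ^ s := pow_pos ha s
    have h1 : a ^ s < b ^ s := by
      apply pow_lt_pow_left₀ hab ha.le (by omega)
    have h2 : (b ^ s)⁻¹ < (a ^ s)⁻¹ := by
      apply inv_strictAnti₀ hpa h1
    have hc := hc1 s hs
    exact mul_lt_mul_of_pos_left h2 (lt_of_lt_of_le zero_lt_one hc)
  have hf1 : (1:ℝ) ≤ f 1 := by
    obtain ⟨t, ht⟩ := hne
    have : f 1 = ∑ s ∈ Ω, ((s-1).choose 2 : ℝ) := by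
      simp [hf]
    rw [this]
    calc (1:ℝ) ≤ ((t-1).choose 2 : ℝ) := hc1 t ht
      _ ≤ ∑ s ∈ Ω, ((s-1).choose 2 : ℝ) :=
        Finset.single_le_sum (fun s hs => le_trans zero_le_one (hc1 s hs)) ht
  set M : ℝ := 1 + ∑ s ∈ Ω, ((s-1).choose 2 : ℝ) with hM
  have hsum_pos : (0:ℝ) < ∑ s ∈ Ω, ((s-1).choose 2 : ℝ) := by
    obtain ⟨t, ht⟩ := hne
    calc (0:ℝ) < 1 := zero_lt_one
      _ ≤ ((t-1).choose 2 : ℝ) := hc1 t ht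
      _ ≤ _ := Finset.single_le_sum (fun s hs => le_trans zero_le_one (hc1 s hs)) ht
  have hM1 : (1:ℝ) < M := by rw [hM]; linarith
  have hfM : f M ≤ 1 := by
    have hstep : ∀ s ∈ Ω, ((s-1).choose 2 : ℝ) * (M ^ s)⁻¹ ≤ ((s-1).choose 2 : ℝ) * M⁻¹ := by
      intro s hs
      have hs3 := hΩ s hs
      have hMpow : M ≤ M ^ s := by
        calc M = M ^ 1 := (pow_one M).symm
          _ ≤ M ^ s := pow_le_pow_right₀ hM1.le (by omega)
      have hMpos : (0:ℝ) < M := by linarith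
      have : (M ^ s)⁻¹ ≤ M⁻¹ := by
        apply inv_anti₀ hMpos hMpow
      exact mul_le_mul_of_nonneg_left this (le_trans zero_le_one (hc1 s hs))
    calc f M ≤ ∑ s ∈ Ω, ((s-1).choose 2 : ℝ) * M⁻¹ := Finset.sum_le_sum hstep
      _ = (∑ s ∈ Ω, ((s-1).choose 2 : ℝ)) * M⁻¹ := by rw [Finset.sum_mul]
      _ ≤ 1 := by
        rw [← div_eq_mul_inv, div_le_one (by linarith)]
        linarith
  have hcont : ContinuousOn f (Set.Icc 1 M) := by
    apply continuousOn_finset_sum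
    intro s hs
    apply ContinuousOn.mul continuousOn_const
    apply ContinuousOn.inv₀ (continuous_pow s).continuousOn
    intro x hx
    have : (0:ℝ) < x := lt_of_lt_of_le zero_lt_one hx.1
    positivity
  have hivt : (1:ℝ) ∈ f '' Set.Icc 1 M := by
    apply intermediate_value_Icc' hM1.le hcont
    exact ⟨hfM, hf1⟩
  obtain ⟨α, hαmem, hαf⟩ := hivt
  have hαpos : (0:ℝ) < α := lt_of_lt_of_le zero_lt_one hαmem.1
  refine ⟨⟨α, ⟨hαpos, hαf.symm⟩, ?_⟩, ?_⟩
  · rintro β ⟨hβpos, hβf⟩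
    have hβf' : f β = 1 := hβf.symm
    rcases lt_trichotomy β α with h | h | h
    · exfalso
      have := hanti β α hβpos h
      rw [hαf, hβf'] at this
      exact lt_irrefl 1 this
    · exact h
    · exfalso
      have := hanti α β hαpos h
      rw [hαf, hβf'] at this
      exact lt_irrefl 1 this
  · intro β hβpos hβf
    have hβf' : f β = 1 := hβf.symm
    have hβ1 : (1:ℝ) ≤ β := by
      by_contra h
      push_neg at h
      have := hanti β 1 hβpos h
      rw [hβf'] at this
      linarith
    rw [hβf]
    apply Finset.sum_lt_sum_of_nonempty hne
    intro s hs
    have hs3 := hΩ s hs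
    have hinv : (0:ℝ) < (β ^ s)⁻¹ := by positivity
    have hlt : ((s-1).choose 2 : ℝ) < (s.choose 2 : ℝ) := by
      have : (s-1).choose 2 < s.choose 2 := by
        obtain ⟨n, rfl⟩ : ∃ n, s = n + 1 := ⟨s-1, by omega⟩
        have hrec := Nat.choose_succ_succ' n 1
        norm_num [Nat.choose_one_right] at hrec
        simp only [Nat.add_sub_cancel]
        omega
      exact_mod_cast this
    have hβ2 : (1:ℝ) ≤ β ^ 2 := one_le_pow₀ hβ1
    have hc := hc1 s hs
    nlinarith [mul_pos (sub_pos.mpr hlt) hinv,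
      mul_nonneg (mul_nonneg (le_trans (by linarith) hlt.le) (by linarith : (0:ℝ) ≤ β^2 - 1)) hinv.le]
end
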